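/- Let q be an odd prime power, ℓ = ord_2(q−1) ≥ 2, and α ∈ F_q× of order 2^ℓ. Then the equation x^{q^2} = α^2 x has exactly q^2 − 1 nonzero solutions in F_{q^{2^ℓ}}, and no nonzero solutions in F_{q^{2^d}} for 2 ≤ d < ℓ. -/

import Mathlib

/-!
With `n = q² - 1`, a nonzero solution is exactly a solution of `x ^ n = α²`. The unit group of
`K` is cyclic of order `N = q ^ 2 ^ ℓ - 1 = (q² - 1) (q² + 1) (q⁴ + 1) ⋯`, so `n ∣ N`, and
`x ^ n = α²` has exactly `n` solutions once `α²` is an `n`-th power, i.e. `(α²) ^ (N / n) = 1`.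
This holds because each of the `ℓ - 1` factors of `N / n` is even while `α²` has order
`2 ^ (ℓ - 1)`. For the second claim, `α` is fixed by the Frobenius `x ↦ x ^ q`, so iterating the
equation gives `x ^ q ^ 2 ^ d = α ^ 2 ^ d * x`, and `α ^ 2 ^ d ≠ 1` for `d < ℓ`.
-/

open Polynomial

theorem two_pow_mul_sub_one_dvd_pow_two_pow_sub_one {Q : ℕ} (hQ : Odd Q) (l : ℕ) :
    2 ^ l * (Q - 1) ∣ Q ^ 2 ^ l - 1 := by
  induction l with
  | zero => simp
  | succ l ih =>
    have hfactor : Q ^ 2 ^ (l + 1) - 1 = (Q ^ 2 ^ l + 1) * (Q ^ 2 ^ l - 1) := by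
      rw [pow_succ, pow_mul, ← Nat.sq_sub_sq, one_pow]
    rw [hfactor, pow_succ, mul_comm (2 ^ l) 2, mul_assoc]
    exact mul_dvd_mul hQ.pow.add_one.two_dvd ih

theorem pow_pow_eq_pow_mul_of_pow_eq_mul {M : Type*} [CommMonoid M] {Q : ℕ} {a x : M}
    (hx : x ^ Q = a * x) (ha : a ^ Q = a) (k : ℕ) : x ^ Q ^ k = a ^ k * x := by
  induction k with
  | zero => simp
  | succ k ih => rw [pow_succ, pow_mul, ih, mul_pow, ← pow_mul, mul_comm k, pow_mul, ha, hx,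
      pow_succ, mul_assoc]

theorem pow_two_pow_succ {M : Type*} [Monoid M] (a : M) (l : ℕ) :
    a ^ 2 ^ (l + 1) = (a ^ 2) ^ 2 ^ l := by
  rw [← pow_mul, pow_succ']

theorem ne_zero_and_pow_succ_eq_mul_iff {M₀ : Type*} [CommMonoidWithZero M₀]
    [IsRightCancelMulZero M₀] {n : ℕ} {c x : M₀} (hn : n ≠ 0) (hc : c ≠ 0) :
    x ≠ 0 ∧ x ^ (n + 1) = c * x ↔ x ^ n = c := by
  refine ⟨fun ⟨hx0, hx⟩ ↦ mul_right_cancel₀ hx0 (by rwa [← pow_succ]), fun hx ↦ ⟨?_, ?_⟩⟩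
  · rintro rfl
    exact hc (by rw [← hx, zero_pow hn])
  · rw [pow_succ, hx]

theorem IsCyclic.exists_pow_eq_iff_pow_card_div_eq_one {G : Type*} [CommGroup G] [IsCyclic G]
    [Finite G] {n : ℕ} (hn : n ∣ Nat.card G) {c : G} :
    (∃ x, x ^ n = c) ↔ c ^ (Nat.card G / n) = 1 := by
  have hle : (powMonoidHom n : G →* G).range ≤ (powMonoidHom (Nat.card G / n)).ker := by
    rintro _ ⟨x, rfl⟩
    simp [← pow_mul, Nat.mul_div_cancel' hn, pow_card_eq_one']
  have hge : Nat.card (powMonoidHom (Nat.card G / n) : G →* G).ker ≤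
      Nat.card (powMonoidHom n : G →* G).range := by
    rw [IsCyclic.card_powMonoidHom_ker, IsCyclic.card_powMonoidHom_range,
      Nat.gcd_eq_right (Nat.div_dvd_of_dvd hn), Nat.gcd_eq_right hn]
  exact SetLike.ext_iff.mp (Subgroup.eq_of_le_of_card_ge hle hge) c

theorem FiniteField.card_filter_pow_eq {K : Type*} [Field K] [Fintype K] [DecidableEq K] {n : ℕ}
    (hn : n ∣ Fintype.card K - 1) {c : K} (hc : c ^ ((Fintype.card K - 1) / n) = 1) :
    (Finset.univ.filter fun x : K => x ^ n = c).card = n := by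
  have hN : Nat.card Kˣ = Fintype.card K - 1 := by
    rw [Nat.card_eq_fintype_card, Fintype.card_units]
  have hN0 : 0 < Fintype.card K - 1 := by
    have := Fintype.one_lt_card (α := K)
    omega
  have hn0 : 0 < n := Nat.pos_of_dvd_of_pos hn hN0
  have hc0 : c ≠ 0 := by
    rintro rfl
    rw [zero_pow (Nat.div_pos (Nat.le_of_dvd hN0 hn) hn0).ne'] at hc
    exact zero_ne_one hc
  obtain ⟨x, hx⟩ : ∃ x : Kˣ, x ^ n = Units.mk0 c hc0 := by
    rw [IsCyclic.exists_pow_eq_iff_pow_card_div_eq_one (hN ▸ hn), hN]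
    exact Units.ext hc
  obtain ⟨g, hg⟩ := IsCyclic.exists_ofOrder_eq_natCard (α := Kˣ)
  have hζ : IsPrimitiveRoot ((g ^ (Nat.card Kˣ / n) : Kˣ) : K) n := by
    rw [IsPrimitiveRoot.coe_units_iff, IsPrimitiveRoot.iff_orderOf, ← hg,
      orderOf_pow_orderOf_div (hg ▸ Nat.card_pos.ne') (hg ▸ hN ▸ hn)]
  have hfilter : (Finset.univ.filter fun x : K => x ^ n = c) = nthRootsFinset n c := by
    ext y
    simp [mem_nthRootsFinset hn0]
  rw [hfilter, nthRootsFinset_def, Multiset.toFinset_card_of_nodup (hζ.nthRoots_nodup hc0),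
    hζ.card_nthRoots, if_pos ⟨x, by simpa using congrArg Units.val hx⟩]

theorem stmt_14_general (q ℓ : ℕ) (hq : Odd q) (hq1 : 1 < q) (hℓ2 : 2 ≤ ℓ)
    (K : Type*) [Field K] [Fintype K] [DecidableEq K]
    (hcard : Fintype.card K = q ^ 2 ^ ℓ)
    (α : K) (hαq : α ^ q = α) (hord : orderOf α = 2 ^ ℓ) :
    (Finset.univ.filter fun x : K => x ≠ 0 ∧ x ^ q ^ 2 = α ^ 2 * x).card =
        q ^ 2 - 1 ∧
      ∀ x : K, x ≠ 0 → x ^ q ^ 2 = α ^ 2 * x →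
        ∀ d, 2 ≤ d → d < ℓ → x ^ q ^ 2 ^ d ≠ x := by
  obtain ⟨m, rfl⟩ : ∃ m, ℓ = m + 1 := ⟨ℓ - 1, by omega⟩
  have hα0 : α ≠ 0 :=
    ne_zero_pow (pow_ne_zero _ two_ne_zero) (by rw [← hord, pow_orderOf_eq_one]; exact one_ne_zero)
  have hα2q : (α ^ 2) ^ q ^ 2 = α ^ 2 := by
    rw [← pow_mul, mul_comm, pow_mul, sq q, pow_mul, hαq, hαq]
  refine ⟨?_, fun x hx0 hx d _ hdl hfix ↦ ?_⟩
  · have hq2 : 1 < q ^ 2 := Nat.one_lt_pow two_ne_zero hq1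
    have hdvd : 2 ^ m * (q ^ 2 - 1) ∣ Fintype.card K - 1 := by
      rw [hcard, pow_two_pow_succ]
      exact two_pow_mul_sub_one_dvd_pow_two_pow_sub_one hq.pow m
    rw [Finset.filter_congr fun y _ ↦ by
      rw [show q ^ 2 = (q ^ 2 - 1) + 1 by omega,
        ne_zero_and_pow_succ_eq_mul_iff (by omega) (pow_ne_zero 2 hα0)]]
    apply FiniteField.card_filter_pow_eq (dvd_of_mul_left_dvd hdvd)
    obtain ⟨k, hk⟩ := Nat.dvd_div_of_mul_dvd ((mul_comm _ _).dvd.trans hdvd)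
    rw [hk, ← pow_mul, ← mul_assoc, ← pow_succ', pow_mul, ← hord, pow_orderOf_eq_one, one_pow]
  · obtain ⟨e, rfl⟩ : ∃ e, d = e + 1 := ⟨d - 1, by omega⟩
    have hiter := pow_pow_eq_pow_mul_of_pow_eq_mul hx hα2q (2 ^ e)
    rw [← pow_two_pow_succ, hfix, ← pow_mul, ← pow_succ'] at hiter
    have hdvd : 2 ^ (m + 1) ∣ 2 ^ (e + 1) :=
      hord ▸ orderOf_dvd_of_pow_eq_one (mul_right_cancel₀ hx0 ((one_mul x).trans hiter)).symm
    exact absurd ((Nat.pow_dvd_pow_iff_le_right (by norm_num)).mp hdvd) (by omega)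

/-- Let `q` be an odd prime power, `ℓ = ord₂(q−1) ≥ 2`, and `α ∈ F_q ⊆ K`
of multiplicative order `2^ℓ`, where `K = F_{q^{2^ℓ}}`.  Then the equation
`x^{q²} = α²·x` has exactly `q² − 1` nonzero solutions in `K`, and no nonzero
solution lies in a subfield `F_{q^{2^d}}` with `2 ≤ d < ℓ`. -/
theorem stmt_14 (q ℓ : ℕ) (hq : Odd q) (hq1 : 1 < q)
    (hqpp : ∃ p k : ℕ, p.Prime ∧ 0 < k ∧ q = p ^ k)
    (hℓ : padicValNat 2 (q - 1) = ℓ) (hℓ2 : 2 ≤ ℓ)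
    (K : Type*) [Field K] [Fintype K] [DecidableEq K]
    (hcard : Fintype.card K = q ^ 2 ^ ℓ)
    (α : K) (hαq : α ^ q = α) (hord : orderOf α = 2 ^ ℓ) :
    (Finset.univ.filter fun x : K => x ≠ 0 ∧ x ^ q ^ 2 = α ^ 2 * x).card =
        q ^ 2 - 1 ∧
      ∀ x : K, x ≠ 0 → x ^ q ^ 2 = α ^ 2 * x →
        ∀ d, 2 ≤ d → d < ℓ → x ^ q ^ 2 ^ d ≠ x :=
  stmt_14_general q ℓ hq hq1 hℓ2 K hcard α hαq hord
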